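/- Let Φ be the cumulative distribution function of the standard Gaussian N(0,1) and g : (0,1) → ℝ its inverse. Fix B > 0 and Δ > 0, and define U*(x) = x · Φ(g(B/x) + Δ) for real x > B. Then: (i) U*(x) → ∞ as x → ∞; and (ii) for every ε > 0, U*(x)/x^ε → 0 as x → ∞. That is, the exact finite-horizon classifier utility ceiling U*(N,B) = N · TPR_NP(B/N) is unbounded but subpolynomial — it is o(N^ε) for every ε > 0 — in contrast to the verifier's linear Θ(N) utility growth. -/

import Mathlib

/-! With `t = g (B / x)` we have `Φ t = B / x`, so `t → -∞` as `x → ∞`, and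
`U x = B · Φ (t + Δ) / Φ t`, `U x / x ^ ε = B ^ (1 - ε) · Φ (t + Δ) · Φ t ^ (ε - 1)`.
The Gaussian tail bounds `η · φ (s - η) ≤ Φ s` for `s ≤ 0` and Mills' `Φ s ≤ φ s / (-s)` for
`s < 0` pin `log Φ s` to `-s² / 2` up to terms linear in `s`. Hence the logarithm of the first
quotient is at least `-Δ t / 2 + O(1)`, while that of the second is at most a quadratic in `t`
with leading coefficient `-ε / 2`. -/

open MeasureTheory ProbabilityTheory
open scoped ENNReal NNReal

open Real Filter Set Topology

lemma gaussianReal_real_eq_integral (μ : ℝ) {v : ℝ≥0} (hv : v ≠ 0) (s : Set ℝ) :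
    (gaussianReal μ v).real s = ∫ x in s, gaussianPDFReal μ v x := by
  rw [measureReal_def, gaussianReal_apply_eq_integral μ hv,
    ENNReal.toReal_ofReal (integral_nonneg fun x => gaussianPDFReal_nonneg μ v x)]

lemma gaussianPDFReal_zero_one (x : ℝ) :
    gaussianPDFReal 0 1 x = (√(2 * π))⁻¹ * exp (-x ^ 2 / 2) := by
  simp [gaussianPDFReal]

lemma log_gaussianPDFReal_zero_one (x : ℝ) :
    log (gaussianPDFReal 0 1 x) = -x ^ 2 / 2 - log √(2 * π) := by
  rw [gaussianPDFReal_zero_one, log_mul (by positivity) (exp_pos _).ne', log_inv, log_exp]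
  ring

lemma mul_gaussianPDFReal_sub_le_cdf {η s : ℝ} (hη : 0 ≤ η) (hs : s ≤ 0) :
    η * gaussianPDFReal 0 1 (s - η) ≤ cdf (gaussianReal 0 1) s := by
  have hmono : ∀ x ∈ Ioc (s - η) s,
      gaussianPDFReal 0 1 (s - η) ≤ gaussianPDFReal 0 1 x := by
    intro x hx
    simp only [gaussianPDFReal_zero_one]
    gcongr _ * exp ?_
    nlinarith [hx.1, hx.2]
  calc η * gaussianPDFReal 0 1 (s - η)
        = ∫ _ in Ioc (s - η) s, gaussianPDFReal 0 1 (s - η) := by simp [hη]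
    _ ≤ ∫ x in Ioc (s - η) s, gaussianPDFReal 0 1 x :=
        setIntegral_mono_on (integrableOn_const measure_Ioc_lt_top.ne)
          (integrable_gaussianPDFReal 0 1).integrableOn measurableSet_Ioc hmono
    _ = (gaussianReal 0 1).real (Ioc (s - η) s) :=
        (gaussianReal_real_eq_integral 0 one_ne_zero _).symm
    _ ≤ cdf (gaussianReal 0 1) s := by
        rw [cdf_eq_real]; exact measureReal_mono Ioc_subset_Iic_self

lemma cdf_gaussianReal_pos (s : ℝ) : 0 < cdf (gaussianReal 0 1) s :=
  calc 0 < 1 * gaussianPDFReal 0 1 (min s 0 - 1) := by simp [gaussianPDFReal_pos]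
    _ ≤ cdf (gaussianReal 0 1) (min s 0) :=
        mul_gaussianPDFReal_sub_le_cdf zero_le_one (min_le_right s 0)
    _ ≤ cdf (gaussianReal 0 1) s := (cdf _).mono (min_le_left s 0)

lemma cdf_gaussianReal_le_gaussianPDFReal_div_neg {s : ℝ} (hs : s < 0) :
    cdf (gaussianReal 0 1) s ≤ gaussianPDFReal 0 1 s / -s := by
  have htangent : ∀ x ∈ Iic s,
      gaussianPDFReal 0 1 x ≤ gaussianPDFReal 0 1 s * exp (s ^ 2) * exp (-s * x) := by
    intro x hx
    -- `-x ^ 2 / 2` lies below its tangent line at `s`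
    simp only [gaussianPDFReal_zero_one, mul_assoc, ← exp_add]
    gcongr
    nlinarith [sq_nonneg (x - s)]
  calc cdf (gaussianReal 0 1) s = ∫ x in Iic s, gaussianPDFReal 0 1 x := by
        rw [cdf_eq_real, gaussianReal_real_eq_integral 0 one_ne_zero]
    _ ≤ ∫ x in Iic s, gaussianPDFReal 0 1 s * exp (s ^ 2) * exp (-s * x) :=
        setIntegral_mono_on (integrable_gaussianPDFReal 0 1).integrableOn
          ((integrableOn_exp_mul_Iic (by linarith) s).const_mul _) measurableSet_Iic htangent
    _ = gaussianPDFReal 0 1 s / -s := by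
        rw [integral_const_mul, integral_exp_mul_Iic (by linarith), mul_div_assoc', mul_assoc,
          ← exp_add, show s ^ 2 + -s * s = 0 by ring, exp_zero, mul_one]

lemma log_cdf_gaussianReal_ge {η s : ℝ} (hη : 0 < η) (hs : s ≤ 0) :
    log η - (s - η) ^ 2 / 2 - log √(2 * π) ≤ log (cdf (gaussianReal 0 1) s) := by
  have h := log_le_log (by positivity [gaussianPDFReal_pos 0 1 (s - η) one_ne_zero])
    (mul_gaussianPDFReal_sub_le_cdf hη.le hs)
  rw [log_mul hη.ne' (gaussianPDFReal_pos 0 1 _ one_ne_zero).ne',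
    log_gaussianPDFReal_zero_one] at h
  linarith

lemma log_cdf_gaussianReal_le {s : ℝ} (hs : s ≤ -1) :
    log (cdf (gaussianReal 0 1) s) ≤ -s ^ 2 / 2 - log √(2 * π) := by
  have hpdf := gaussianPDFReal_pos 0 1 s one_ne_zero
  calc log (cdf (gaussianReal 0 1) s) ≤ log (gaussianPDFReal 0 1 s / -s) :=
        log_le_log (cdf_gaussianReal_pos s)
          (cdf_gaussianReal_le_gaussianPDFReal_div_neg (by linarith))
    _ = log (gaussianPDFReal 0 1 s) - log (-s) := log_div hpdf.ne' (by linarith)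
    _ ≤ -s ^ 2 / 2 - log √(2 * π) := by
        rw [log_gaussianPDFReal_zero_one]
        linarith [log_nonneg (show (1 : ℝ) ≤ -s by linarith)]

lemma tendsto_quadratic_atBot {a : ℝ} (ha : a < 0) (b c : ℝ) :
    Tendsto (fun t => a * t ^ 2 + b * t + c) atBot atBot := by
  have hlin : Tendsto (fun t => a * t + b) atBot atTop :=
    tendsto_atTop_add_const_right _ b (tendsto_id.const_mul_atBot_of_neg ha)
  refine tendsto_atBot_add_const_right _ c ((tendsto_id.atBot_mul_atTop₀ hlin).congr fun t => ?_)
  simp only [id]; ring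

lemma tendsto_cdf_gaussianReal_add_div_cdf_atBot {Δ : ℝ} (hΔ : 0 < Δ) :
    Tendsto (fun t => cdf (gaussianReal 0 1) (t + Δ) / cdf (gaussianReal 0 1) t) atBot atTop := by
  have hlin : Tendsto (fun t => -(Δ / 2) * t + (log (Δ / 2) - Δ ^ 2 / 8)) atBot atTop :=
    tendsto_atTop_add_const_right _ _ (tendsto_id.const_mul_atBot_of_neg (by linarith))
  have hlog : Tendsto (fun t => log (cdf (gaussianReal 0 1) (t + Δ))
      - log (cdf (gaussianReal 0 1) t)) atBot atTop := by
    refine tendsto_atTop_mono' _ ?_ hlin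
    filter_upwards [eventually_le_atBot (-1 - Δ)] with t ht
    have hnum := log_cdf_gaussianReal_ge (η := Δ / 2) (s := t + Δ) (by linarith) (by linarith)
    have hden := log_cdf_gaussianReal_le (s := t) (by linarith)
    linarith
  refine (tendsto_exp_atTop.comp hlog).congr fun t => ?_
  simp [exp_sub, exp_log (cdf_gaussianReal_pos _)]

lemma tendsto_cdf_gaussianReal_add_mul_rpow_atBot_of_le_one (Δ : ℝ) {ε : ℝ} (hε : 0 < ε)
    (hε1 : ε ≤ 1) :
    Tendsto (fun t => cdf (gaussianReal 0 1) (t + Δ) * cdf (gaussianReal 0 1) t ^ (ε - 1))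
      atBot (𝓝 0) := by
  set k := log √(2 * π)
  have hquad : Tendsto (fun t => -(ε / 2) * t ^ 2 + (ε - 1 - Δ) * t
      + (-Δ ^ 2 / 2 - k + (1 - ε) * (1 / 2 + k))) atBot atBot :=
    tendsto_quadratic_atBot (by linarith) _ _
  have hlog : Tendsto (fun t => log (cdf (gaussianReal 0 1) (t + Δ))
      + (ε - 1) * log (cdf (gaussianReal 0 1) t)) atBot atBot := by
    refine tendsto_atBot_mono' _ ?_ hquad
    filter_upwards [eventually_le_atBot (-1 - Δ), eventually_le_atBot 0] with t ht ht0
    have hnum := log_cdf_gaussianReal_le (s := t + Δ) (by linarith)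
    have hden := mul_le_mul_of_nonneg_left
      (log_cdf_gaussianReal_ge (η := 1) (s := t) one_pos ht0) (sub_nonneg.2 hε1)
    rw [log_one] at hden
    linarith
  refine (tendsto_exp_atBot.comp hlog).congr fun t => ?_
  simp [exp_add, rpow_def_of_pos (cdf_gaussianReal_pos _), exp_log (cdf_gaussianReal_pos _),
    mul_comm]

lemma tendsto_cdf_gaussianReal_add_mul_rpow_atBot (Δ : ℝ) {ε : ℝ} (hε : 0 < ε) :
    Tendsto (fun t => cdf (gaussianReal 0 1) (t + Δ) * cdf (gaussianReal 0 1) t ^ (ε - 1))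
      atBot (𝓝 0) := by
  refine squeeze_zero (fun t => mul_nonneg (cdf_nonneg _ _) (rpow_nonneg (cdf_nonneg _ _) _))
    (fun t => mul_le_mul_of_nonneg_left ?_ (cdf_nonneg _ _))
    (tendsto_cdf_gaussianReal_add_mul_rpow_atBot_of_le_one Δ (lt_min hε one_pos)
      (min_le_right ε 1))
  exact rpow_le_rpow_of_exponent_ge (cdf_gaussianReal_pos t) (cdf_le_one _ t)
    (by linarith [min_le_left ε 1])

lemma Monotone.tendsto_atBot_of_tendsto_comp {α : Type*} {l : Filter α} {F : ℝ → ℝ}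
    (hF : Monotone F) {a : ℝ} (hlt : ∀ y, a < F y) {f : α → ℝ}
    (h : Tendsto (fun x => F (f x)) l (𝓝 a)) : Tendsto f l atBot :=
  tendsto_atBot.2 fun y =>
    (h.eventually (gt_mem_nhds (hlt y))).mono fun _ hx => (hF.reflect_lt hx).le

lemma mul_div_rpow_eq_rpow_mul_mul_div_rpow {B x : ℝ} (hB : 0 < B) (hx : 0 < x) (y ε : ℝ) :
    x * y / x ^ ε = B ^ (1 - ε) * (y * (B / x) ^ (ε - 1)) := by
  rw [div_rpow hB.le hx.le, rpow_sub hB, rpow_sub hB, rpow_sub hx, rpow_one, rpow_one]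
  field_simp

/-- The finite-horizon classifier utility ceiling `U*(x) = x · Φ(g(B/x) + Δ)`
is unbounded but subpolynomial: `U*(x) → ∞` as `x → ∞`, yet
`U*(x)/x^ε → 0` for every `ε > 0`. -/
theorem ceiling_unbounded_subpolynomial (Φ g : ℝ → ℝ)
    (hΦ : ∀ z : ℝ, Φ z = ((gaussianReal 0 1) (Set.Iic z)).toReal)
    (hg : ∀ δ ∈ Set.Ioo (0 : ℝ) 1, Φ (g δ) = δ)
    (B Δ : ℝ) (hB : 0 < B) (hΔ : 0 < Δ)
    (U : ℝ → ℝ) (hU : ∀ x : ℝ, B < x → U x = x * Φ (g (B / x) + Δ)) :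
    Filter.Tendsto U Filter.atTop Filter.atTop ∧
      ∀ ε : ℝ, 0 < ε →
        Filter.Tendsto (fun x : ℝ => U x / x ^ ε) Filter.atTop (nhds 0) := by
  obtain rfl : Φ = cdf (gaussianReal 0 1) := funext fun z => (hΦ z).trans (cdf_eq_real _ z).symm
  have hlevel : ∀ᶠ x in atTop, B < x ∧ cdf (gaussianReal 0 1) (g (B / x)) = B / x := by
    filter_upwards [eventually_gt_atTop B] with x hx
    exact ⟨hx, hg _ ⟨div_pos hB (hB.trans hx), (div_lt_one (hB.trans hx)).2 hx⟩⟩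
  have hquantile : Tendsto (fun x => g (B / x)) atTop atBot :=
    (cdf _).mono.tendsto_atBot_of_tendsto_comp cdf_gaussianReal_pos
      ((tendsto_const_nhds.div_atTop tendsto_id).congr' (hlevel.mono fun x hx => hx.2.symm))
  refine ⟨?_, fun ε hε => ?_⟩
  · have h := ((tendsto_cdf_gaussianReal_add_div_cdf_atBot hΔ).comp hquantile).const_mul_atTop hB
    refine h.congr' (hlevel.mono fun x ⟨hx, hΦx⟩ => ?_)
    simp only [Function.comp, hΦx, hU x hx]
    field_simp
  · have h := ((tendsto_cdf_gaussianReal_add_mul_rpow_atBot Δ hε).comp hquantile).const_mul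
      (B ^ (1 - ε))
    rw [mul_zero] at h
    refine h.congr' (hlevel.mono fun x ⟨hx, hΦx⟩ => ?_)
    simp only [Function.comp, hΦx, hU x hx, mul_div_rpow_eq_rpow_mul_mul_div_rpow hB (hB.trans hx)]
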